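/- In R = ℚ[x,y]/(x², y^{2k+1} + c·x·y^{2k−1}) with k ≥ 1 and c ≠ 0, the element x·y^{2k} is nonzero, and every element of the form a·y^{2k+2} + b·x·y^{2k} (a, b ∈ ℚ) equals (b − ac)·x·y^{2k}. -/
import Mathlib
open MvPolynomial

lemma aux_mono (c:ℚ)(n:ℕ) : (C c * X 0 * X 1 ^ n : MvPolynomial (Fin 2) ℚ) = monomial (Finsupp.single 0 1 + Finsupp.single 1 n) c := by
  rw [X_pow_eq_monomial, X, C_mul_monomial, monomial_mul]
  simp

noncomputable def relIdealQ (c : ℚ) (k : ℕ) : Ideal (MvPolynomial (Fin 2) ℚ) :=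
  Ideal.span {X 0 ^ 2, X 1 ^ (2 * k + 1) + C c * X 0 * X 1 ^ (2 * k - 1)}

/-- In R = ℚ[x,y]/(x², y^{2k+1} + c·x·y^{2k−1}) with k ≥ 1 and c ≠ 0, the element
x·y^{2k} is nonzero, and a·y^{2k+2} + b·x·y^{2k} = (b − ac)·x·y^{2k} for all a, b ∈ ℚ. -/
theorem stmt_10 (k : ℕ) (hk : 1 ≤ k) (c : ℚ) (hc : c ≠ 0) :
    Ideal.Quotient.mk (relIdealQ c k) (X 0 * X 1 ^ (2 * k)) ≠ 0 ∧
    ∀ a b : ℚ,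
      Ideal.Quotient.mk (relIdealQ c k)
          (C a * X 1 ^ (2 * k + 2) + C b * X 0 * X 1 ^ (2 * k)) =
      Ideal.Quotient.mk (relIdealQ c k) (C (b - a * c) * X 0 * X 1 ^ (2 * k)) := by
  obtain ⟨m, rfl⟩ : ∃ m, k = m + 1 := ⟨k - 1, by omega⟩
  have e1 : 2 * (m + 1) - 1 = 2 * m + 1 := by omega
  have e2 : 2 * (m + 1) = 2 * m + 2 := by omega
  rw [relIdealQ, e1, e2]
  constructor
  · intro h
    rw [Ideal.Quotient.eq_zero_iff_mem, Ideal.mem_span_pair] at h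
    obtain ⟨p, q, hpq⟩ := h
    have h1 := congrArg (coeff (Finsupp.single 0 1 + Finsupp.single 1 (2*m+2))) hpq
    have h2 := congrArg (coeff (Finsupp.single 1 (2*m+2+2))) hpq
    rw [mul_add] at h1 h2
    have hx2 : (X 0 ^ 2 : MvPolynomial (Fin 2) ℚ) = monomial (Finsupp.single 0 2) 1 := X_pow_eq_monomial
    have hy : (X 1 ^ (2*m+2+1) : MvPolynomial (Fin 2) ℚ) = monomial (Finsupp.single 1 (2*m+2+1)) 1 := X_pow_eq_monomial
    have htgt : (X 0 * X 1 ^ (2*m+2) : MvPolynomial (Fin 2) ℚ) = monomial (Finsupp.single 0 1 + Finsupp.single 1 (2*m+2)) 1 := by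
      have := aux_mono 1 (2*m+2); simpa using this
    simp only [coeff_add, hx2, hy, aux_mono, htgt, coeff_mul_monomial', coeff_monomial] at h1 h2
    have d1 : ¬((Finsupp.single (0:Fin 2) 2) ≤ Finsupp.single 0 1 + Finsupp.single 1 (2*m+2)) := by
      rw [Finsupp.le_def]; push_neg; exact ⟨0, by simp⟩
    have d2 : ¬((Finsupp.single (1:Fin 2) (2*m+2+1)) ≤ Finsupp.single 0 1 + Finsupp.single 1 (2*m+2)) := by
      rw [Finsupp.le_def]; push_neg; exact ⟨1, by simp⟩
    have d3 : (Finsupp.single (0:Fin 2) 1 + Finsupp.single 1 (2*m+1)) ≤ Finsupp.single 0 1 + Finsupp.single 1 (2*m+2) := by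
      rw [Finsupp.le_def]; intro s
      fin_cases s <;> simp [Finsupp.single_apply]
    have d4 : ((Finsupp.single (0:Fin 2) 1 + Finsupp.single 1 (2*m+2)) - (Finsupp.single 0 1 + Finsupp.single 1 (2*m+1))) = Finsupp.single 1 1 := by
      ext s; fin_cases s <;> simp [Finsupp.single_apply] <;> omega
    have d5 : ¬((Finsupp.single (0:Fin 2) 2) ≤ Finsupp.single 1 (2*m+2+2)) := by
      rw [Finsupp.le_def]; push_neg; exact ⟨0, by simp⟩
    have d6 : (Finsupp.single (1:Fin 2) (2*m+2+1)) ≤ Finsupp.single 1 (2*m+2+2) := by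
      rw [Finsupp.le_def]; intro s
      fin_cases s <;> simp [Finsupp.single_apply]
    have d7 : ((Finsupp.single (1:Fin 2) (2*m+2+2)) - Finsupp.single 1 (2*m+2+1)) = Finsupp.single 1 1 := by
      ext s; fin_cases s <;> simp [Finsupp.single_apply]
    have d8 : ¬((Finsupp.single (0:Fin 2) 1 + Finsupp.single 1 (2*m+1)) ≤ Finsupp.single 1 (2*m+2+2)) := by
      rw [Finsupp.le_def]; push_neg; exact ⟨0, by simp⟩
    have d9 : ((Finsupp.single (0:Fin 2) 1 + Finsupp.single 1 (2*m+2)) ≠ Finsupp.single 1 (2*m+2+2)) := by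
      intro h
      have := DFunLike.congr_fun h 0
      simp [Finsupp.single_apply] at this
    rw [if_neg d1, if_neg d2, if_pos d3, d4, if_pos trivial] at h1
    rw [if_neg d5, if_pos d6, d7, if_neg d8, if_neg d9] at h2
    simp only [zero_add, add_zero, mul_one] at h1 h2
    rw [h2, zero_mul] at h1
    exact absurd h1 (by norm_num)
  · intro a b
    rw [Ideal.Quotient.eq, Ideal.mem_span_pair]
    refine ⟨0, C a * X 1, ?_⟩
    rw [map_sub, map_mul]
    ring
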